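/- arXiv:1510.02013 — 5 statements merged into one kernel-verified Lean document; each statement's English description precedes it below -/
import Mathlib

section
/- For every n, m ∈ ℕ, every C^∞ function f : ℝ² → ℝ, and every point x = (x₁, x₂) with x₁ > 0 and x₂ > 0, the commutator identity W_n(W_m f)(x) − W_m(W_n f)(x) = (n − m)·(W_{n+m} f)(x) holds, where the outer operator is applied to the function y ↦ (W_m f)(y) defined on the open positive quadrant. In particular the family {W_n : n ≥ 0} satisfies the Witt-type bracket relation [W_n, W_m] = (n − m) W_{n+m}. -/
open Real

lemma sabr_dirDeriv_contDiff {f : ℝ × ℝ → ℝ} (hf : ContDiff ℝ (⊤ : ℕ∞) f) (v : ℝ × ℝ) :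
    ContDiff ℝ (⊤ : ℕ∞) (fun y => fderiv ℝ f y v) :=
  (hf.fderiv_right (by simp)).clm_apply contDiff_const

lemma sabr_fderiv_dirDeriv {f : ℝ × ℝ → ℝ} (hf : ContDiff ℝ (⊤ : ℕ∞) f) (x v w : ℝ × ℝ) :
    fderiv ℝ (fun y => fderiv ℝ f y v) x w = fderiv ℝ (fderiv ℝ f) x w v := by
  have hd : DifferentiableAt ℝ (fderiv ℝ f) x :=
    ((hf.fderiv_right (m := 1) (WithTop.coe_le_coe.mpr le_top)).differentiable one_ne_zero).differentiableAt
  have h : HasFDerivAt (fun y => fderiv ℝ f y v)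
      ((ContinuousLinearMap.apply ℝ ℝ v).comp (fderiv ℝ (fderiv ℝ f) x)) x :=
    ((ContinuousLinearMap.apply ℝ ℝ v).hasFDerivAt).comp x hd.hasFDerivAt
  rw [h.fderiv]; rfl

lemma sabr_sndDeriv_symm {f : ℝ × ℝ → ℝ} (hf : ContDiff ℝ (⊤ : ℕ∞) f) (x v w : ℝ × ℝ) :
    fderiv ℝ (fderiv ℝ f) x v w = fderiv ℝ (fderiv ℝ f) x w v :=
  (hf.contDiffAt.isSymmSndFDerivAt (by rw [minSmoothness_of_isRCLikeNormedField]; exact WithTop.coe_le_coe.mpr le_top)) v w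

lemma sabr_dirDeriv_prod (c a : ℝ) (m : ℕ) (x : ℝ × ℝ) (hx1 : 0 < x.1)
    (F : ℝ × ℝ → ℝ) (hF : DifferentiableAt ℝ F x) (v : ℝ × ℝ) :
    fderiv ℝ (fun y => c * y.1 ^ a * y.2 ^ m * F y) x v =
      c * (a * x.1 ^ (a - 1)) * v.1 * x.2 ^ m * F x
      + c * x.1 ^ a * ((m : ℝ) * x.2 ^ (m - 1)) * v.2 * F x
      + c * x.1 ^ a * x.2 ^ m * fderiv ℝ F x v := by
  have hp1 : HasFDerivAt (fun y : ℝ × ℝ => y.1 ^ a)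
      ((a * x.1 ^ (a - 1)) • ContinuousLinearMap.fst ℝ ℝ ℝ) x :=
    (Real.hasStrictDerivAt_rpow_const (p := a) (Or.inl hx1.ne')).hasDerivAt.comp_hasFDerivAt x
      hasFDerivAt_fst
  have hp2 : HasFDerivAt (fun y : ℝ × ℝ => y.2 ^ m)
      (((m : ℝ) * x.2 ^ (m - 1)) • ContinuousLinearMap.snd ℝ ℝ ℝ) x :=
    (hasDerivAt_pow m x.2).comp_hasFDerivAt x hasFDerivAt_snd
  have h := (((hp1.const_mul c).mul hp2).mul hF.hasFDerivAt).fderiv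
  rw [show (fun y : ℝ × ℝ => c * y.1 ^ a * y.2 ^ m * F y)
      = ((fun y : ℝ × ℝ => c * y.1 ^ a) * fun y : ℝ × ℝ => y.2 ^ m) * F from rfl, h]
  simp [ContinuousLinearMap.add_apply, ContinuousLinearMap.smul_apply]
  ring

/-- The SABR basis vector fields, as first-order differential operators.
For `n ≥ 1`, `(W_n g)(x) = (1/(1-β)) x₁^{1-n(1-β)} x₂ⁿ ∂₁g(x)` (real power),
and `(W₀ g)(x) = -x₂ ∂₂g(x)`. -/
noncomputable def sabrW (β : ℝ) (n : ℕ) (g : ℝ × ℝ → ℝ) (x : ℝ × ℝ) : ℝ :=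
  if n = 0 then -x.2 * fderiv ℝ g x (0, 1)
  else (1 / (1 - β)) * x.1 ^ (1 - (n : ℝ) * (1 - β)) * x.2 ^ n * fderiv ℝ g x (1, 0)

lemma sabrW_zero (β : ℝ) (g : ℝ × ℝ → ℝ) (x : ℝ × ℝ) :
    sabrW β 0 g x = -x.2 * fderiv ℝ g x (0, 1) := by simp [sabrW]

lemma sabrW_pos (β : ℝ) {k : ℕ} (hk : k ≠ 0) (g : ℝ × ℝ → ℝ) (x : ℝ × ℝ) :
    sabrW β k g x
      = (1 / (1 - β)) * x.1 ^ (1 - (k : ℝ) * (1 - β)) * x.2 ^ k * fderiv ℝ g x (1, 0) := by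
  simp [sabrW, hk]

/-- The family `{W_n : n ≥ 0}` of SABR basis vector fields satisfies the Witt-type
bracket relation `[W_n, W_m] = (n - m) W_{n+m}` on the open positive quadrant. -/
theorem sabr_witt_relation (β : ℝ) (hβ₁ : 1 / 2 < β) (hβ₂ : β < 1)
    (n m : ℕ) (f : ℝ × ℝ → ℝ) (hf : ContDiff ℝ (⊤ : ℕ∞) f)
    (x : ℝ × ℝ) (hx₁ : 0 < x.1) (hx₂ : 0 < x.2) :
    sabrW β n (fun y => sabrW β m f y) x - sabrW β m (fun y => sabrW β n f y) x
      = ((n : ℝ) - (m : ℝ)) * sabrW β (n + m) f x := by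
  have hb : (1 : ℝ) - β ≠ 0 := by intro h; linarith
  have hF1 : DifferentiableAt ℝ (fun y => fderiv ℝ f y ((1 : ℝ), (0 : ℝ))) x :=
    ((sabr_dirDeriv_contDiff hf (1, 0)).differentiable (by simp)).differentiableAt
  have hF2 : DifferentiableAt ℝ (fun y => fderiv ℝ f y ((0 : ℝ), (1 : ℝ))) x :=
    ((sabr_dirDeriv_contDiff hf (0, 1)).differentiable (by simp)).differentiableAt
  have hW0 : (fun y => sabrW β 0 f y)
      = fun y : ℝ × ℝ => (-1 : ℝ) * y.1 ^ (0 : ℝ) * y.2 ^ (1 : ℕ) * fderiv ℝ f y (0, 1) := by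
    funext y; rw [sabrW_zero, Real.rpow_zero]; ring
  have hWk : ∀ k : ℕ, k ≠ 0 → (fun y => sabrW β k f y)
      = fun y : ℝ × ℝ =>
        (1 / (1 - β)) * y.1 ^ (1 - (k : ℝ) * (1 - β)) * y.2 ^ k * fderiv ℝ f y (1, 0) := by
    intro k hk; funext y; rw [sabrW_pos β hk]
  have hsymm : fderiv ℝ (fun y => fderiv ℝ f y ((1 : ℝ), (0 : ℝ))) x (0, 1)
      = fderiv ℝ (fun y => fderiv ℝ f y ((0 : ℝ), (1 : ℝ))) x (1, 0) := by
    rw [sabr_fderiv_dirDeriv hf, sabr_fderiv_dirDeriv hf, sabr_sndDeriv_symm hf]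
  have key0 : ∀ k : ℕ, k ≠ 0 →
      sabrW β 0 (fun y => sabrW β k f y) x - sabrW β k (fun y => sabrW β 0 f y) x
        = -(k : ℝ) * sabrW β k f x := by
    intro k hk
    have hp : x.2 * x.2 ^ (k - 1) = x.2 ^ k := by
      rw [← pow_succ']; congr 1; omega
    rw [sabrW_zero, sabrW_pos β hk, sabrW_pos β hk, hWk k hk, hW0,
      sabr_dirDeriv_prod (1 / (1 - β)) (1 - (k : ℝ) * (1 - β)) k x hx₁ _ hF1 (0, 1),
      sabr_dirDeriv_prod (-1) 0 1 x hx₁ _ hF2 (1, 0), hsymm]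
    simp only [Real.rpow_zero, pow_one, Nat.sub_self, pow_zero]
    linear_combination (-(k : ℝ) * (1 / (1 - β)) * x.1 ^ (1 - (k : ℝ) * (1 - β))
      * fderiv ℝ f x ((1 : ℝ), (0 : ℝ))) * hp
  rcases Nat.eq_zero_or_pos n with hn | hn
  · rcases Nat.eq_zero_or_pos m with hm | hm
    · subst hn; subst hm; simp
    · subst hn
      rw [key0 m (by omega)]
      simp only [Nat.cast_zero, Nat.zero_add, zero_add]
      ring
  · rcases Nat.eq_zero_or_pos m with hm | hm
    · subst hm
      have h := key0 n (by omega)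
      simp only [Nat.cast_zero, Nat.add_zero, sub_zero]
      linarith
    · -- both positive
      have hn' : n ≠ 0 := (by omega)
      have hm' : m ≠ 0 := (by omega)
      have h1 : x.1 ^ (1 - (n : ℝ) * (1 - β)) * x.1 ^ (1 - (m : ℝ) * (1 - β) - 1)
          = x.1 ^ (1 - ((n + m : ℕ) : ℝ) * (1 - β)) := by
        rw [← Real.rpow_add hx₁]; congr 1; push_cast; ring
      have h2 : x.1 ^ (1 - (m : ℝ) * (1 - β)) * x.1 ^ (1 - (n : ℝ) * (1 - β) - 1)
          = x.1 ^ (1 - ((n + m : ℕ) : ℝ) * (1 - β)) := by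
        rw [← Real.rpow_add hx₁]; congr 1; push_cast; ring
      have h3 : x.2 ^ (n + m) = x.2 ^ n * x.2 ^ m := pow_add x.2 n m
      have hcc : (1 / (1 - β)) * (1 - β) = 1 := by field_simp
      rw [sabrW_pos β hn', sabrW_pos β hm', sabrW_pos β (by omega : n + m ≠ 0),
        hWk m hm', hWk n hn',
        sabr_dirDeriv_prod (1 / (1 - β)) (1 - (m : ℝ) * (1 - β)) m x hx₁ _ hF1 (1, 0),
        sabr_dirDeriv_prod (1 / (1 - β)) (1 - (n : ℝ) * (1 - β)) n x hx₁ _ hF1 (1, 0),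
        h3]
      linear_combination
        ((1 / (1 - β)) ^ 2 * (1 - (m : ℝ) * (1 - β)) * x.2 ^ n * x.2 ^ m
          * fderiv ℝ f x ((1 : ℝ), (0 : ℝ))) * h1
        - ((1 / (1 - β)) ^ 2 * (1 - (n : ℝ) * (1 - β)) * x.2 ^ n * x.2 ^ m
          * fderiv ℝ f x ((1 : ℝ), (0 : ℝ))) * h2
        + (((n : ℝ) - (m : ℝ)) * (1 / (1 - β)) * x.1 ^ (1 - ((n + m : ℕ) : ℝ) * (1 - β))
          * x.2 ^ n * x.2 ^ m * fderiv ℝ f x ((1 : ℝ), (0 : ℝ))) * hcc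
end

section
/- For all x = (x₁, x₂) with x₁ > 0, x₂ > 0: (i) A₁(x) = −νρ·W₀(x) + (1−β)·W₁(x); (ii) A₂(x) = −ν√(1−ρ²)·W₀(x); (iii) the Stratonovich drift satisfies −(1/2)·( (DA₁)(x)[A₁(x)] + (DA₂)(x)[A₂(x)] ) = (1/2)ν²·W₀(x) + (1/2)(β−1)νρ·W₁(x) + (1/2)β(β−1)·W₂(x), where (DA_i)(x) denotes the Fréchet derivative of A_i at x. In particular the SABR vector fields V₀ = −(1/2)(DA₁·A₁ + DA₂·A₂), V₁ = A₁, V₂ = A₂ lie in the span of {W₀, W₁, W₂}. -/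
/-- The SABR basis vector fields as `ℝ²`-valued maps:
`W_n(x) = ((1/(1-β)) x₁^{1-n(1-β)} x₂ⁿ, 0)` for `n ≥ 1` and `W₀(x) = (0, -x₂)`. -/
noncomputable def sabrWvec (β : ℝ) (n : ℕ) (x : ℝ × ℝ) : ℝ × ℝ :=
  if n = 0 then (0, -x.2)
  else ((1 / (1 - β)) * x.1 ^ (1 - (n : ℝ) * (1 - β)) * x.2 ^ n, 0)

/-- The SABR diffusion vector field `A₁(x) = (x₂ x₁^β, νρ x₂)`. -/
noncomputable def sabrA1 (β ν ρ : ℝ) (x : ℝ × ℝ) : ℝ × ℝ :=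
  (x.2 * x.1 ^ β, ν * ρ * x.2)

/-- The SABR diffusion vector field `A₂(x) = (0, ν√(1-ρ²) x₂)`. -/
noncomputable def sabrA2 (ν ρ : ℝ) (x : ℝ × ℝ) : ℝ × ℝ :=
  (0, ν * Real.sqrt (1 - ρ ^ 2) * x.2)

/-!
Both diffusion fields are read off the definitions of `W₀` and `W₁` directly. For the drift,
`A₂` is linear, so `DA₂·A₂ = (0, ν²(1-ρ²)x₂)`, while `DA₁·A₁` has first component
`β x₂² x₁^{2β-1} + νρ x₂ x₁^β`; the exponents `β = 1 - (1-β)` and `2β - 1 = 1 - 2(1-β)` are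
exactly those of `W₁` and `W₂`.
-/

open ContinuousLinearMap

section SABR

variable (β ν ρ : ℝ) (x : ℝ × ℝ)

theorem sabrWvec_zero : sabrWvec β 0 x = (0, -x.2) := if_pos rfl

theorem sabrWvec_of_ne_zero {n : ℕ} (hn : n ≠ 0) :
    sabrWvec β n x = ((1 / (1 - β)) * x.1 ^ (1 - (n : ℝ) * (1 - β)) * x.2 ^ n, 0) :=
  if_neg hn

theorem sabrA1_eq_sabrWvec (hβ : β ≠ 1) :
    sabrA1 β ν ρ x = (-(ν * ρ)) • sabrWvec β 0 x + (1 - β) • sabrWvec β 1 x := by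
  have hβ' : 1 - β ≠ 0 := sub_ne_zero.mpr hβ.symm
  rw [sabrWvec_zero, sabrWvec_of_ne_zero _ _ one_ne_zero]
  simp only [sabrA1, Prod.smul_mk, Prod.mk_add_mk, smul_eq_mul, Nat.cast_one, one_mul,
    sub_sub_cancel, pow_one, Prod.mk.injEq]
  constructor
  · field_simp
    ring
  · ring

theorem sabrA2_eq_sabrWvec :
    sabrA2 ν ρ x = (-(ν * Real.sqrt (1 - ρ ^ 2))) • sabrWvec β 0 x := by
  simp only [sabrA2, sabrWvec_zero, Prod.smul_mk, smul_eq_mul, mul_zero, Prod.mk.injEq, true_and]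
  ring

theorem hasFDerivAt_sabrA1 (hx : x.1 ≠ 0) :
    HasFDerivAt (sabrA1 β ν ρ)
      ((x.2 • (β * x.1 ^ (β - 1)) • fst ℝ ℝ ℝ + x.1 ^ β • snd ℝ ℝ ℝ).prod
        ((ν * ρ) • snd ℝ ℝ ℝ)) x :=
  (hasFDerivAt_snd.mul (hasFDerivAt_fst.rpow_const (Or.inl hx))).prodMk
    (hasFDerivAt_snd.const_mul (ν * ρ))

theorem hasFDerivAt_sabrA2 :
    HasFDerivAt (sabrA2 ν ρ) ((0 : ℝ × ℝ →L[ℝ] ℝ).prod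
      ((ν * Real.sqrt (1 - ρ ^ 2)) • snd ℝ ℝ ℝ)) x :=
  (hasFDerivAt_const 0 x).prodMk (hasFDerivAt_snd.const_mul _)

theorem fderiv_sabrA1_apply_self (hx : x.1 ≠ 0) :
    fderiv ℝ (sabrA1 β ν ρ) x (sabrA1 β ν ρ x) =
      (β * x.2 ^ 2 * (x.1 ^ (β - 1) * x.1 ^ β) + ν * ρ * x.2 * x.1 ^ β,
        (ν * ρ) ^ 2 * x.2) := by
  rw [(hasFDerivAt_sabrA1 β ν ρ x hx).fderiv]
  simp only [sabrA1, prod_apply, add_apply, smul_apply, coe_fst', coe_snd',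
    smul_eq_mul, Prod.mk.injEq]
  constructor <;> ring

theorem fderiv_sabrA2_apply_self (hρ : ρ ^ 2 ≤ 1) :
    fderiv ℝ (sabrA2 ν ρ) x (sabrA2 ν ρ x) = (0, ν ^ 2 * (1 - ρ ^ 2) * x.2) := by
  rw [(hasFDerivAt_sabrA2 ν ρ x).fderiv]
  have hsqrt : Real.sqrt (1 - ρ ^ 2) ^ 2 = 1 - ρ ^ 2 := Real.sq_sqrt (by linarith)
  simp only [sabrA2, prod_apply, zero_apply, smul_apply, coe_snd', smul_eq_mul,
    Prod.mk.injEq, true_and]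
  linear_combination ν ^ 2 * x.2 * hsqrt

theorem sabr_drift_eq_sabrWvec (hβ : β ≠ 1) (hρ : ρ ^ 2 ≤ 1) (hx : 0 < x.1) :
    -((1 : ℝ) / 2) • (fderiv ℝ (sabrA1 β ν ρ) x (sabrA1 β ν ρ x)
        + fderiv ℝ (sabrA2 ν ρ) x (sabrA2 ν ρ x))
      = ((1 / 2) * ν ^ 2) • sabrWvec β 0 x
        + ((1 / 2) * (β - 1) * ν * ρ) • sabrWvec β 1 x
        + ((1 / 2) * β * (β - 1)) • sabrWvec β 2 x := by
  have hβ' : 1 - β ≠ 0 := sub_ne_zero.mpr hβ.symm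
  have hexp₂ : (1 : ℝ) - (2 : ℕ) * (1 - β) = (β - 1) + β := by push_cast; ring
  rw [fderiv_sabrA1_apply_self β ν ρ x hx.ne', fderiv_sabrA2_apply_self ν ρ x hρ,
    sabrWvec_zero, sabrWvec_of_ne_zero _ _ one_ne_zero, sabrWvec_of_ne_zero _ _ two_ne_zero,
    hexp₂, Real.rpow_add hx]
  simp only [Prod.smul_mk, Prod.mk_add_mk, smul_eq_mul, Nat.cast_one, one_mul, sub_sub_cancel,
    pow_one, Prod.mk.injEq]
  constructor
  · field_simp
    ring
  · ring

end SABR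

theorem sabr_vector_fields_span_general (β ν ρ : ℝ) (hβ₂ : β < 1)
    (hρ₁ : -1 < ρ) (hρ₂ : ρ < 1) (x : ℝ × ℝ) (hx₁ : 0 < x.1) :
    sabrA1 β ν ρ x = (-(ν * ρ)) • sabrWvec β 0 x + (1 - β) • sabrWvec β 1 x ∧
    sabrA2 ν ρ x = (-(ν * Real.sqrt (1 - ρ ^ 2))) • sabrWvec β 0 x ∧
    -((1 : ℝ) / 2) • (fderiv ℝ (sabrA1 β ν ρ) x (sabrA1 β ν ρ x)
        + fderiv ℝ (sabrA2 ν ρ) x (sabrA2 ν ρ x))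
      = ((1 / 2) * ν ^ 2) • sabrWvec β 0 x
        + ((1 / 2) * (β - 1) * ν * ρ) • sabrWvec β 1 x
        + ((1 / 2) * β * (β - 1)) • sabrWvec β 2 x := by
  have hρ : ρ ^ 2 ≤ 1 := by nlinarith
  exact ⟨sabrA1_eq_sabrWvec β ν ρ x hβ₂.ne, sabrA2_eq_sabrWvec β ν ρ x,
    sabr_drift_eq_sabrWvec β ν ρ x hβ₂.ne hρ hx₁⟩

/-- On the open positive quadrant, the SABR vector fields `V₁ = A₁`, `V₂ = A₂` and the
Stratonovich-corrected drift `V₀ = -(1/2)(DA₁·A₁ + DA₂·A₂)` lie in the span of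
`{W₀, W₁, W₂}`, with the explicit expressions
`A₁ = -νρ W₀ + (1-β) W₁`, `A₂ = -ν√(1-ρ²) W₀`, and
`V₀ = (1/2)ν² W₀ + (1/2)(β-1)νρ W₁ + (1/2)β(β-1) W₂`. -/
theorem sabr_vector_fields_span (β ν ρ : ℝ) (hβ₁ : 1 / 2 < β) (hβ₂ : β < 1)
    (hρ₁ : -1 < ρ) (hρ₂ : ρ < 1) (x : ℝ × ℝ) (hx₁ : 0 < x.1) (hx₂ : 0 < x.2) :
    sabrA1 β ν ρ x = (-(ν * ρ)) • sabrWvec β 0 x + (1 - β) • sabrWvec β 1 x ∧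
    sabrA2 ν ρ x = (-(ν * Real.sqrt (1 - ρ ^ 2))) • sabrWvec β 0 x ∧
    -((1 : ℝ) / 2) • (fderiv ℝ (sabrA1 β ν ρ) x (sabrA1 β ν ρ x)
        + fderiv ℝ (sabrA2 ν ρ) x (sabrA2 ν ρ x))
      = ((1 / 2) * ν ^ 2) • sabrWvec β 0 x
        + ((1 / 2) * (β - 1) * ν * ρ) • sabrWvec β 1 x
        + ((1 / 2) * β * (β - 1)) • sabrWvec β 2 x :=
  sabr_vector_fields_span_general β ν ρ hβ₂ hρ₁ hρ₂ x hx₁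
end

section
/- For every n, m ∈ ℕ, every C^∞ function f : ℝ² → ℝ, and every point x = (x₁, x₂) with x₁ > 0, x₂ > 0, the following commutator identities hold (outer operators applied to the inner ones as functions on the open positive quadrant): M_n(M_m f)(x) − M_m(M_n f)(x) = 0; M_n(L_m f)(x) − L_m(M_n f)(x) = (n − 2)·(M_{n+m} f)(x); and L_n(L_m f)(x) − L_m(L_n f)(x) = (n − m)·(L_{n+m} f)(x). -/
/-- The Heston basis vector field `M_n` as a first-order differential operator:
`(M_n g)(x) = 2 x₁ x₂^{1-n/2} ∂₁g(x)` (real power). -/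
noncomputable def hestonM (n : ℕ) (g : ℝ × ℝ → ℝ) (x : ℝ × ℝ) : ℝ :=
  2 * x.1 * x.2 ^ (1 - (n : ℝ) / 2) * fderiv ℝ g x (1, 0)

/-- The Heston basis vector field `L_n` as a first-order differential operator:
`(L_n g)(x) = 2 x₂^{1-n/2} ∂₂g(x)` (real power). -/
noncomputable def hestonL (n : ℕ) (g : ℝ × ℝ → ℝ) (x : ℝ × ℝ) : ℝ :=
  2 * x.2 ^ (1 - (n : ℝ) / 2) * fderiv ℝ g x (0, 1)

lemma fderiv_M_apply (a : ℝ) (g : ℝ × ℝ → ℝ) (x : ℝ × ℝ)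
    (hg : DifferentiableAt ℝ g x) (hx₂ : 0 < x.2) (v : ℝ × ℝ) :
    fderiv ℝ (fun y : ℝ × ℝ => 2 * y.1 * y.2 ^ a * g y) x v
      = (2 * v.1 * x.2 ^ a + 2 * x.1 * (a * x.2 ^ (a - 1)) * v.2) * g x
        + 2 * x.1 * x.2 ^ a * fderiv ℝ g x v := by
  have h2 : HasFDerivAt (fun y : ℝ × ℝ => y.2 ^ a)
      ((a * x.2 ^ (a - 1)) • ContinuousLinearMap.snd ℝ ℝ ℝ) x :=
    (hasFDerivAt_snd.rpow_const (Or.inl hx₂.ne'))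
  have h1 : HasFDerivAt (fun y : ℝ × ℝ => 2 * y.1)
      ((2 : ℝ) • ContinuousLinearMap.fst ℝ ℝ ℝ) x := hasFDerivAt_fst.const_mul 2
  have h : fderiv ℝ (fun y : ℝ × ℝ => 2 * y.1 * y.2 ^ a * g y) x = _ :=
    ((h1.mul h2).mul hg.hasFDerivAt).fderiv
  rw [h]
  simp [ContinuousLinearMap.smul_apply, smul_eq_mul]
  ring

lemma fderiv_L_apply (a : ℝ) (g : ℝ × ℝ → ℝ) (x : ℝ × ℝ)
    (hg : DifferentiableAt ℝ g x) (hx₂ : 0 < x.2) (v : ℝ × ℝ) :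
    fderiv ℝ (fun y : ℝ × ℝ => 2 * y.2 ^ a * g y) x v
      = 2 * (a * x.2 ^ (a - 1)) * v.2 * g x + 2 * x.2 ^ a * fderiv ℝ g x v := by
  have h2 : HasFDerivAt (fun y : ℝ × ℝ => 2 * y.2 ^ a)
      ((2 : ℝ) • ((a * x.2 ^ (a - 1)) • ContinuousLinearMap.snd ℝ ℝ ℝ)) x :=
    (hasFDerivAt_snd.rpow_const (Or.inl hx₂.ne')).const_mul 2
  have h : fderiv ℝ (fun y : ℝ × ℝ => 2 * y.2 ^ a * g y) x = _ :=
    (h2.mul hg.hasFDerivAt).fderiv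
  rw [h]
  simp [ContinuousLinearMap.smul_apply, smul_eq_mul]
  ring

/-- Commutation relations of the Heston basis vector fields on the open positive quadrant:
`[M_n, M_m] = 0`, `[M_n, L_m] = (n-2) M_{n+m}`, `[L_n, L_m] = (n-m) L_{n+m}`. -/
theorem heston_bracket_relations (n m : ℕ) (f : ℝ × ℝ → ℝ) (hf : ContDiff ℝ (⊤ : ℕ∞) f)
    (x : ℝ × ℝ) (hx₁ : 0 < x.1) (hx₂ : 0 < x.2) :
    (hestonM n (fun y => hestonM m f y) x - hestonM m (fun y => hestonM n f y) x = 0) ∧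
    (hestonM n (fun y => hestonL m f y) x - hestonL m (fun y => hestonM n f y) x
      = ((n : ℝ) - 2) * hestonM (n + m) f x) ∧
    (hestonL n (fun y => hestonL m f y) x - hestonL m (fun y => hestonL n f y) x
      = ((n : ℝ) - (m : ℝ)) * hestonL (n + m) f x) := by
  have hd : Differentiable ℝ (fderiv ℝ f) := (hf.fderiv_right (m := 1) (WithTop.coe_le_coe.mpr le_top)).differentiable one_ne_zero
  have hF : ∀ u : ℝ × ℝ, Differentiable ℝ (fun y => fderiv ℝ f y u) := fun u =>
    ((hf.fderiv_right (m := 1) (WithTop.coe_le_coe.mpr le_top)).clm_apply contDiff_const).differentiable one_ne_zero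
  have e : ∀ (u v : ℝ × ℝ), fderiv ℝ (fun y => fderiv ℝ f y u) x v
      = fderiv ℝ (fderiv ℝ f) x v u := by
    intro u v
    rw [fderiv_clm_apply (hd x) (differentiableAt_const u)]
    simp
  have hsymm : fderiv ℝ (fun y => fderiv ℝ f y ((1:ℝ), (0:ℝ))) x (0, 1)
      = fderiv ℝ (fun y => fderiv ℝ f y ((0:ℝ), (1:ℝ))) x (1, 0) := by
    rw [e, e]
    exact second_derivative_symmetric (fun y => (hf.differentiable (by simp) y).hasFDerivAt)
      (hd x).hasFDerivAt (0, 1) (1, 0)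
  have r1n : x.2 ^ (1 - (n:ℝ)/2 - 1) = x.2 ^ (1 - (n:ℝ)/2) / x.2 := by
    rw [Real.rpow_sub hx₂, Real.rpow_one]
  have r1m : x.2 ^ (1 - (m:ℝ)/2 - 1) = x.2 ^ (1 - (m:ℝ)/2) / x.2 := by
    rw [Real.rpow_sub hx₂, Real.rpow_one]
  have r2 : x.2 ^ (1 - ((n + m : ℕ) : ℝ)/2)
      = x.2 ^ (1 - (n:ℝ)/2) * x.2 ^ (1 - (m:ℝ)/2) / x.2 := by
    rw [show (1 - ((n + m : ℕ) : ℝ)/2) = (1 - (n:ℝ)/2) + (1 - (m:ℝ)/2) - 1 by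
      push_cast; ring, Real.rpow_sub hx₂, Real.rpow_add hx₂, Real.rpow_one]
  have hxne : x.2 ≠ 0 := hx₂.ne'
  refine ⟨?_, ?_, ?_⟩
  · simp only [hestonM]
    rw [fderiv_M_apply _ _ _ (hF (1, 0) x) hx₂, fderiv_M_apply _ _ _ (hF (1, 0) x) hx₂]
    ring
  · simp only [hestonM, hestonL]
    rw [fderiv_L_apply _ _ _ (hF (0, 1) x) hx₂, fderiv_M_apply _ _ _ (hF (1, 0) x) hx₂,
      hsymm, r1n, r2]
    field_simp
    ring
  · simp only [hestonL]
    rw [fderiv_L_apply _ _ _ (hF (0, 1) x) hx₂, fderiv_L_apply _ _ _ (hF (0, 1) x) hx₂,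
      r1n, r1m, r2]
    field_simp
    ring
end

section
/- Define W^H_{2n} = L_n and W^H_{2n+1} = M_n for n ∈ ℕ. Then for every n, m ∈ ℕ, every C^∞ function f : ℝ² → ℝ, and every x = (x₁,x₂) with x₁ > 0, x₂ > 0, one has W^H_n(W^H_m f)(x) − W^H_m(W^H_n f)(x) = c_{n,m}·(W^H_{n+m} f)(x), where c_{n,m} = 0 if n and m are both odd; c_{n,m} = (n − 5)/2 if n is odd and m is even; c_{n,m} = (5 − m)/2 if n is even and m is odd; and c_{n,m} = (n − m)/2 if n and m are both even. In particular the family {W^H_n : n ≥ 0} satisfies the Witt-type bracket relation [W^H_n, W^H_m] = c_{n,m} W^H_{n+m}. -/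
/-- The reindexed Heston family: `W^H_{2n} = L_n`, `W^H_{2n+1} = M_n`. -/
noncomputable def hestonW (k : ℕ) : (ℝ × ℝ → ℝ) → (ℝ × ℝ → ℝ) :=
  if k % 2 = 0 then hestonL (k / 2) else hestonM (k / 2)

/-- The structure constants `c_{n,m}` of the reindexed Heston family. -/
noncomputable def hestonC (n m : ℕ) : ℝ :=
  if Odd n ∧ Odd m then 0
  else if Odd n ∧ Even m then ((n : ℝ) - 5) / 2
  else if Even n ∧ Odd m then (5 - (m : ℝ)) / 2
  else ((n : ℝ) - (m : ℝ)) / 2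

private lemma heston_inner (f : ℝ × ℝ → ℝ) (hf : ContDiff ℝ (⊤ : ℕ∞) f) (x v : ℝ × ℝ) :
    HasFDerivAt (fun y => fderiv ℝ f y v)
      ((fderiv ℝ (fderiv ℝ f) x).flip v) x := by
  have hC : ContDiff ℝ (⊤ : ℕ∞) (fderiv ℝ f) := hf.fderiv_right (by simp)
  have hd : HasFDerivAt (fderiv ℝ f) (fderiv ℝ (fderiv ℝ f) x) x :=
    (hC.differentiable (by simp) x).hasFDerivAt
  have h := hd.clm_apply (hasFDerivAt_const v x)
  simpa using h

private lemma heston_symm (f : ℝ × ℝ → ℝ) (hf : ContDiff ℝ (⊤ : ℕ∞) f) (x v w : ℝ × ℝ) :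
    fderiv ℝ (fderiv ℝ f) x v w = fderiv ℝ (fderiv ℝ f) x w v := by
  have hC : ContDiff ℝ (⊤ : ℕ∞) (fderiv ℝ f) := hf.fderiv_right (by simp)
  exact second_derivative_symmetric
    (fun y => (hf.differentiable (by simp) y).hasFDerivAt)
    ((hC.differentiable (by simp) x).hasFDerivAt) v w

private lemma key_L (f : ℝ × ℝ → ℝ) (hf : ContDiff ℝ (⊤ : ℕ∞) f) (x : ℝ × ℝ)
    (hx₂ : 0 < x.2) (b : ℝ) (w : ℝ × ℝ) :
    fderiv ℝ (fun y : ℝ × ℝ => 2 * y.2 ^ b * fderiv ℝ f y (0, 1)) x w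
      = 2 * (b * x.2 ^ (b - 1) * w.2) * fderiv ℝ f x (0, 1)
        + 2 * x.2 ^ b * fderiv ℝ (fderiv ℝ f) x w (0, 1) := by
  have h1 : HasFDerivAt (fun y : ℝ × ℝ => y.2 ^ b)
      ((b * x.2 ^ (b - 1)) • (ContinuousLinearMap.snd ℝ ℝ ℝ)) x :=
    (hasFDerivAt_snd).rpow_const (Or.inl hx₂.ne')
  have h := ((h1.const_mul 2).mul (heston_inner f hf x (0, 1))).fderiv
  rw [show (fun y : ℝ × ℝ => 2 * y.2 ^ b * fderiv ℝ f y (0, 1))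
      = (fun y : ℝ × ℝ => 2 * y.2 ^ b) * (fun y : ℝ × ℝ => fderiv ℝ f y (0, 1)) from rfl, h]
  simp [ContinuousLinearMap.smul_apply, ContinuousLinearMap.flip_apply, smul_eq_mul]
  ring

private lemma key_M (f : ℝ × ℝ → ℝ) (hf : ContDiff ℝ (⊤ : ℕ∞) f) (x : ℝ × ℝ)
    (hx₂ : 0 < x.2) (b : ℝ) (w : ℝ × ℝ) :
    fderiv ℝ (fun y : ℝ × ℝ => 2 * y.1 * y.2 ^ b * fderiv ℝ f y (1, 0)) x w
      = (2 * w.1 * x.2 ^ b + 2 * x.1 * (b * x.2 ^ (b - 1) * w.2)) * fderiv ℝ f x (1, 0)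
        + 2 * x.1 * x.2 ^ b * fderiv ℝ (fderiv ℝ f) x w (1, 0) := by
  have h1 : HasFDerivAt (fun y : ℝ × ℝ => y.2 ^ b)
      ((b * x.2 ^ (b - 1)) • (ContinuousLinearMap.snd ℝ ℝ ℝ)) x :=
    (hasFDerivAt_snd).rpow_const (Or.inl hx₂.ne')
  have h0 : HasFDerivAt (fun y : ℝ × ℝ => 2 * y.1)
      ((2 : ℝ) • (ContinuousLinearMap.fst ℝ ℝ ℝ)) x := (hasFDerivAt_fst).const_mul 2
  have h := (((h0.mul h1)).mul (heston_inner f hf x (1, 0))).fderiv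
  rw [show (fun y : ℝ × ℝ => 2 * y.1 * y.2 ^ b * fderiv ℝ f y (1, 0))
      = ((fun y : ℝ × ℝ => 2 * y.1) * (fun y : ℝ × ℝ => y.2 ^ b)) * (fun y : ℝ × ℝ => fderiv ℝ f y (1, 0)) from rfl, h]
  simp [ContinuousLinearMap.smul_apply, ContinuousLinearMap.flip_apply, smul_eq_mul]
  ring

private lemma hestonW_even (k : ℕ) : hestonW (k + k) = hestonL k := by
  unfold hestonW
  rw [if_pos (by omega), show (k + k) / 2 = k by omega]

private lemma hestonW_odd (k : ℕ) : hestonW (2 * k + 1) = hestonM k := by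
  unfold hestonW
  rw [if_neg (by omega), show (2 * k + 1) / 2 = k by omega]

/-- The family `{W^H_n : n ≥ 0}` satisfies the Witt-type bracket relation
`[W^H_n, W^H_m] = c_{n,m} W^H_{n+m}` on the open positive quadrant. -/
theorem heston_witt_relation (n m : ℕ) (f : ℝ × ℝ → ℝ) (hf : ContDiff ℝ (⊤ : ℕ∞) f)
    (x : ℝ × ℝ) (hx₁ : 0 < x.1) (hx₂ : 0 < x.2) :
    hestonW n (fun y => hestonW m f y) x - hestonW m (fun y => hestonW n f y) x
      = hestonC n m * hestonW (n + m) f x := by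
  have e1 : ∀ c : ℝ, x.2 ^ (1 - c / 2 - 1) = x.2 ^ (1 - c / 2) / x.2 := fun c => by
    rw [Real.rpow_sub hx₂, Real.rpow_one]
  rcases Nat.even_or_odd n with ⟨a, rfl⟩ | ⟨a, rfl⟩ <;>
    rcases Nat.even_or_odd m with ⟨b, rfl⟩ | ⟨b, rfl⟩
  · -- both even : L_a, L_b
    rw [hestonW_even, hestonW_even, show a + a + (b + b) = (a + b) + (a + b) by ring,
      hestonW_even]
    have hc : hestonC (a + a) (b + b) = ((a : ℝ) - b) := by
      have h1 : ¬ Odd (a + a) := by simp [Nat.odd_iff]; omega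
      have h2 : ¬ Odd (b + b) := by simp [Nat.odd_iff]; omega
      simp [hestonC, h1, h2]
      push_cast; ring
    simp only [hestonL]
    rw [key_L f hf x hx₂ _ (0, 1), key_L f hf x hx₂ _ (0, 1), hc]
    have e3 : x.2 ^ (1 - ((a : ℝ) + b) / 2)
        = x.2 ^ (1 - (a : ℝ) / 2) * x.2 ^ (1 - (b : ℝ) / 2) / x.2 := by
      rw [show (1 - ((a : ℝ) + b) / 2) = (1 - (a : ℝ) / 2) + (1 - (b : ℝ) / 2) - 1 by ring,
        Real.rpow_sub hx₂, Real.rpow_add hx₂, Real.rpow_one]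
    push_cast
    rw [e1, e1, e3]
    field_simp
    ring
  · -- n even, m odd : L_a, M_b
    rw [hestonW_even, hestonW_odd, show a + a + (2 * b + 1) = 2 * (a + b) + 1 by ring,
      hestonW_odd]
    have hc : hestonC (a + a) (2 * b + 1) = (5 - ((2 * b + 1 : ℕ) : ℝ)) / 2 := by
      have h1 : ¬ Odd (a + a) := by simp [Nat.odd_iff]; omega
      have h2 : Odd (2 * b + 1) := ⟨b, by omega⟩
      have h3 : Even (a + a) := ⟨a, rfl⟩
      simp [hestonC, h1, h2, h3]
    simp only [hestonL, hestonM]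
    rw [key_M f hf x hx₂ _ (0, 1), key_L f hf x hx₂ _ (1, 0), hc,
      heston_symm f hf x (0, 1) (1, 0)]
    have e3 : x.2 ^ (1 - (((a : ℕ) + b : ℕ) : ℝ) / 2)
        = x.2 ^ (1 - (a : ℝ) / 2) * x.2 ^ (1 - (b : ℝ) / 2) / x.2 := by
      push_cast
      rw [show (1 - ((a : ℝ) + b) / 2) = (1 - (a : ℝ) / 2) + (1 - (b : ℝ) / 2) - 1 by ring,
        Real.rpow_sub hx₂, Real.rpow_add hx₂, Real.rpow_one]
    rw [e1, e1, e3]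
    push_cast
    norm_num
    field_simp
    ring
  · -- n odd, m even : M_a, L_b
    rw [hestonW_odd, hestonW_even, show 2 * a + 1 + (b + b) = 2 * (a + b) + 1 by ring,
      hestonW_odd]
    have hc : hestonC (2 * a + 1) (b + b) = (((2 * a + 1 : ℕ) : ℝ) - 5) / 2 := by
      have h1 : Odd (2 * a + 1) := ⟨a, by omega⟩
      have h2 : ¬ Odd (b + b) := by simp [Nat.odd_iff]; omega
      have h3 : Even (b + b) := ⟨b, rfl⟩
      simp [hestonC, h1, h2, h3]
    simp only [hestonL, hestonM]
    rw [key_M f hf x hx₂ _ (0, 1), key_L f hf x hx₂ _ (1, 0), hc,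
      heston_symm f hf x (0, 1) (1, 0)]
    have e3 : x.2 ^ (1 - (((a : ℕ) + b : ℕ) : ℝ) / 2)
        = x.2 ^ (1 - (a : ℝ) / 2) * x.2 ^ (1 - (b : ℝ) / 2) / x.2 := by
      push_cast
      rw [show (1 - ((a : ℝ) + b) / 2) = (1 - (a : ℝ) / 2) + (1 - (b : ℝ) / 2) - 1 by ring,
        Real.rpow_sub hx₂, Real.rpow_add hx₂, Real.rpow_one]
    rw [e1, e1, e3]
    push_cast
    norm_num
    field_simp
    ring
  · -- both odd : M_a, M_b
    rw [hestonW_odd, hestonW_odd, show 2 * a + 1 + (2 * b + 1) = (a + b + 1) + (a + b + 1) by ring,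
      hestonW_even]
    have hc : hestonC (2 * a + 1) (2 * b + 1) = 0 := by
      have h1 : Odd (2 * a + 1) := ⟨a, by omega⟩
      have h2 : Odd (2 * b + 1) := ⟨b, by omega⟩
      simp [hestonC, h1, h2]
    simp only [hestonL, hestonM]
    rw [key_M f hf x hx₂ _ (1, 0), key_M f hf x hx₂ _ (1, 0), hc]
    norm_num
    ring
end

section
/- Let B be a Banach algebra over ℝ, let W₀, W₁, …, W_k ∈ B satisfy W₀·W_i − W_i·W₀ = α_i • W_i for i = 1, …, k with constants α_i ∈ ℝ, and let a₀, a₁, …, a_k ∈ ℝ. Define R₀(λ) = exp(−λ a₀ W₀)·exp(λ ∑_{i=0}^{k} a_i W_i) for λ ∈ ℝ. Then R₀(λ) is invertible for every λ, the map λ ↦ R₀(λ) is differentiable, and (d/dλ R₀(λ))·R₀(λ)^{−1} = ∑_{i=1}^{k} a_i · exp(−α_i λ a₀) • W_i, where exp(−α_i λ a₀) is the real exponential. -/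
/-!
Write `A = a₀ W₀` and `N = ∑_{i ≥ 1} aᵢ Wᵢ`, so that `R₀(λ) = exp(-λA) exp(λ(A + N))`.
The product rule gives `R₀' R₀⁻¹ = exp(-λA) N exp(λA)`. Each `Wᵢ` is an eigenvector of
`ad A` with eigenvalue `αᵢ a₀`, i.e. `Wᵢ (A + αᵢ a₀) = A Wᵢ`; exponentiating this
intertwining relation yields `exp(-λA) Wᵢ exp(λA) = e^{-αᵢ λ a₀} Wᵢ`.
-/

open NormedSpace

section

variable {B : Type*} [NormedRing B] [CompleteSpace B]

theorem hasDerivAt_exp_smul_mul_exp_smul {𝕂 : Type*} [RCLike 𝕂] [NormedAlgebra 𝕂 B]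
    (x y : B) (t : 𝕂) :
    HasDerivAt (fun u : 𝕂 => exp (u • x) * exp (u • y))
      (exp (t • x) * (x + y) * exp (t • y)) t :=
  ((hasDerivAt_exp_smul_const x t).mul (hasDerivAt_exp_smul_const' y t)).congr_deriv
    (by noncomm_ring)

theorem exp_mul_mul_exp_mul_inverse_exp_mul_exp [NormedAlgebra ℚ B] (x y z : B) :
    exp x * z * exp y * Ring.inverse (exp x * exp y) = exp x * z * exp (-x) := by
  have hsplit : exp x * z * exp y = exp x * z * exp (-x) * (exp x * exp y) := by
    rw [← mul_assoc (exp x * z * exp (-x)), mul_assoc (exp x * z),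
      ← exp_add_of_commute (Commute.refl x).neg_left, neg_add_cancel, exp_zero, mul_one]
  rw [hsplit, Ring.mul_inverse_cancel_right _ _ ((isUnit_exp x).mul (isUnit_exp y))]

theorem exp_mul_mul_exp_neg_of_commutator_eq_smul [NormedAlgebra ℝ B] {x w : B} {c : ℝ}
    (h : x * w - w * x = c • w) : exp x * w * exp (-x) = Real.exp c • w := by
  let _ : NormedAlgebra ℚ B := .restrictScalars ℚ ℝ B
  have hsemi : SemiconjBy w (x + c • 1) x := by
    rw [SemiconjBy, mul_add, mul_smul_one, ← h]
    abel
  have hexp : exp (x + c • (1 : B)) = Real.exp c • exp x := by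
    rw [add_comm, exp_add_of_commute ((Commute.one_left x).smul_left c),
      ← Algebra.algebraMap_eq_smul_one, ← algebraMap_exp_comm, ← Real.exp_eq_exp_ℝ,
      Algebra.algebraMap_eq_smul_one, smul_one_mul]
  rw [← hsemi.exp_right.eq, hexp, mul_smul_comm, smul_mul_assoc, mul_assoc,
    ← exp_add_of_commute (Commute.refl x).neg_right, add_neg_cancel, exp_zero, mul_one]

end

/-- In a real Banach algebra, let `W₀, W₁, …, W_k` satisfy `W₀·W_i - W_i·W₀ = α_i • W_i`
for `i = 1, …, k`, let `a₀, …, a_k ∈ ℝ`, and let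
`R₀(λ) = exp(-λ a₀ W₀)·exp(λ ∑_{i=0}^{k} a_i W_i)`. Then `R₀(λ)` is invertible,
`λ ↦ R₀(λ)` is differentiable, and
`R₀'(λ)·R₀(λ)⁻¹ = ∑_{i=1}^{k} a_i e^{-α_i λ a₀} • W_i`. -/
theorem log_deriv_R0 {B : Type*} [NormedRing B] [NormedAlgebra ℝ B] [CompleteSpace B]
    (k : ℕ) (W : ℕ → B) (α : ℕ → ℝ)
    (hW : ∀ i, 1 ≤ i → i ≤ k → W 0 * W i - W i * W 0 = α i • W i)
    (a : ℕ → ℝ) (R₀ : ℝ → B)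
    (hR₀ : ∀ s : ℝ, R₀ s = NormedSpace.exp (-((s * a 0) • W 0)) *
      NormedSpace.exp (s • ∑ i ∈ Finset.range (k + 1), a i • W i)) :
    ∀ s : ℝ,
      IsUnit (R₀ s) ∧
      DifferentiableAt ℝ R₀ s ∧
      deriv R₀ s * Ring.inverse (R₀ s)
        = ∑ i ∈ Finset.Icc 1 k, (a i * Real.exp (-(α i * s * a 0))) • W i := by
  let _ : NormedAlgebra ℚ B := .restrictScalars ℚ ℝ B
  intro s
  set A := a 0 • W 0
  set N := ∑ i ∈ Finset.Icc 1 k, a i • W i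
  have hR : R₀ = fun t => exp (t • -A) * exp (t • (A + N)) := by
    funext t
    rw [hR₀, Finset.sum_range_eq_add_Ico _ (by omega), Finset.Ico_add_one_right_eq_Icc,
      smul_neg, smul_smul]
  have hderiv := hasDerivAt_exp_smul_mul_exp_smul (-A) (A + N) s
  rw [← hR] at hderiv
  refine ⟨hR ▸ (isUnit_exp _).mul (isUnit_exp _), hderiv.differentiableAt, ?_⟩
  rw [hderiv.deriv, hR, exp_mul_mul_exp_mul_inverse_exp_mul_exp, neg_add_cancel_left,
    Finset.mul_sum, Finset.sum_mul]
  refine Finset.sum_congr rfl fun i hi => ?_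
  obtain ⟨hi₁, hik⟩ := Finset.mem_Icc.mp hi
  have hcomm : s • -A * W i - W i * (s • -A) = (-(α i * s * a 0)) • W i := by
    simp only [A, smul_neg, neg_mul, mul_neg, smul_mul_assoc, mul_smul_comm]
    linear_combination (norm := module) (-(s * a 0)) • hW i hi₁ hik
  rw [mul_smul_comm, smul_mul_assoc, exp_mul_mul_exp_neg_of_commutator_eq_smul hcomm, smul_smul]
end
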